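/- Let σ ∈ (1/2, 1) and define 𝒲_σ(x) = ∫_{-∞}^{∞} R(e^y) R(e^{x−y}) e^{x + (2σ−1)y} dy for x ∈ ℝ, where R(y) = 2∑_{n=1}^∞ e^{-π n² y²}. Then for all x ≥ 0, 𝒲_σ(x) < 2𝒞², where 𝒞 = sup_{y>0} (y³+y) R(y). -/

import Mathlib

open Real Set MeasureTheory

noncomputable def Rf (y : ℝ) : ℝ := 2 * ∑' n : ℕ, Real.exp (-π * (n + 1) ^ 2 * y ^ 2)

noncomputable def Wf (σ x : ℝ) : ℝ :=
  ∫ y : ℝ, Rf (Real.exp y) * Rf (Real.exp (x - y)) * Real.exp (x + (2 * σ - 1) * y)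

noncomputable def calC : ℝ := sSup {x : ℝ | ∃ y : ℝ, 0 < y ∧ x = (y ^ 3 + y) * Rf y}

/-! Bounding both theta factors by `R(u) ≤ 𝒞 / (u³ + u)` and using `e^y e^(x-y) = e^x` and
`e^(-y) ≤ e^(x-y)` (as `x ≥ 0`), the integrand is at most `𝒞² e^((2σ-1)y) / (e^y + e^(-y))²`, and
`e^((2σ-1)y) ≤ e^|y| ≤ e^y + e^(-y)`. The remaining integral `∫ (e^y + e^(-y))⁻¹ dy = π / 2` is
computed from the antiderivative `arctan (e^y)`, and `π / 2 < 2`. That `𝒞` is finite comes from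
`R(y) ≤ 1 / y` for small `y` and Gaussian decay of `R` for large `y`. -/

open Filter Topology

section ThetaTail

variable {y : ℝ}

lemma antitoneOn_exp_neg_mul_sq {b : ℝ} (hb : 0 ≤ b) :
    AntitoneOn (fun t : ℝ => exp (-b * t ^ 2)) (Ici 0) := by
  intro s hs t _ hst
  have : s ^ 2 ≤ t ^ 2 := pow_le_pow_left₀ hs hst 2
  simp only [neg_mul, exp_le_exp, neg_le_neg_iff]
  gcongr

lemma exp_neg_pi_mul_sq_eq (y : ℝ) (n : ℕ) :
    exp (-π * (n + 1) ^ 2 * y ^ 2) = exp (-(π * y ^ 2) * ((n + 1 : ℕ) : ℝ) ^ 2) := by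
  push_cast
  ring_nf

lemma summable_exp_neg_pi_mul_sq (hy : 0 < y) :
    Summable fun n : ℕ => exp (-π * (n + 1) ^ 2 * y ^ 2) := by
  have hb : 0 < π * y ^ 2 := by positivity
  simp_rw [exp_neg_pi_mul_sq_eq]
  exact (summable_nat_add_iff 1).2 <|
    (antitoneOn_exp_neg_mul_sq hb.le).summable_of_integrableOn_Ioi_zero
      (integrable_exp_neg_mul_sq hb).integrableOn fun t _ => (exp_pos _).le

-- integral test: the sum is bounded by `∫_0^∞ exp (-π y² t²) dt = 1 / (2 y)`
lemma tsum_exp_neg_pi_mul_sq_le (hy : 0 < y) :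
    ∑' n : ℕ, exp (-π * (n + 1) ^ 2 * y ^ 2) ≤ 1 / (2 * y) := by
  have hb : 0 < π * y ^ 2 := by positivity
  simp_rw [exp_neg_pi_mul_sq_eq]
  refine ((antitoneOn_exp_neg_mul_sq hb.le).tsum_add_one_le_integral
    (integrable_exp_neg_mul_sq hb).integrableOn fun t _ => (exp_pos _).le).trans_eq ?_
  rw [integral_gaussian_Ioi, div_mul_cancel_left₀ pi_ne_zero, ← inv_pow, sqrt_sq (by positivity)]
  ring

lemma Rf_nonneg (y : ℝ) : 0 ≤ Rf y :=
  mul_nonneg zero_le_two (tsum_nonneg fun _ => (exp_pos _).le)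

lemma Rf_pos (hy : 0 < y) : 0 < Rf y :=
  mul_pos zero_lt_two ((summable_exp_neg_pi_mul_sq hy).tsum_pos (fun _ => (exp_pos _).le) 0
    (exp_pos _))

lemma Rf_le_inv (hy : 0 < y) : Rf y ≤ y⁻¹ := by
  have := tsum_exp_neg_pi_mul_sq_le hy
  rw [Rf, inv_eq_one_div]
  calc 2 * _ ≤ 2 * (1 / (2 * y)) := by gcongr
    _ = 1 / y := by field_simp

-- every term decays at least like the first one: `(n + 1)² (y² - s²) ≥ y² - s²`
lemma Rf_le_exp_mul_Rf {s : ℝ} (hs : 0 < s) (hsy : s ≤ y) :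
    Rf y ≤ exp (-π * (y ^ 2 - s ^ 2)) * Rf s := by
  have hy : 0 < y := hs.trans_le hsy
  have hterm (n : ℕ) : exp (-π * (n + 1) ^ 2 * y ^ 2)
      ≤ exp (-π * (y ^ 2 - s ^ 2)) * exp (-π * (n + 1) ^ 2 * s ^ 2) := by
    rw [← exp_add, exp_le_exp]
    have h1 : (1 : ℝ) ≤ (n + 1) ^ 2 := one_le_pow₀ (by linarith [n.cast_nonneg (α := ℝ)])
    have h2 : s ^ 2 ≤ y ^ 2 := pow_le_pow_left₀ hs.le hsy 2
    nlinarith [pi_pos, mul_le_mul_of_nonneg_right h1 (sub_nonneg.2 h2)]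
  rw [Rf, Rf, mul_left_comm]
  refine mul_le_mul_of_nonneg_left ?_ zero_le_two
  rw [← tsum_mul_left]
  exact (summable_exp_neg_pi_mul_sq hy).tsum_le_tsum hterm
    ((summable_exp_neg_pi_mul_sq hs).mul_left _)

lemma cube_add_self_le_exp_pi_mul_sq (hy : 1 ≤ y) : y ^ 3 + y ≤ exp (π * y ^ 2) :=
  calc y ^ 3 + y ≤ (y + 1) ^ 3 := by nlinarith
    _ ≤ exp y ^ 3 := by gcongr; exact add_one_le_exp y
    _ = exp (3 * y) := by rw [← exp_nat_mul]; norm_num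
    _ ≤ exp (π * y ^ 2) := exp_le_exp.2 (by nlinarith [pi_gt_three])

lemma cube_add_self_mul_Rf_le (hy : 0 < y) : (y ^ 3 + y) * Rf y ≤ exp π := by
  rcases le_total y 1 with hy1 | hy1
  · calc (y ^ 3 + y) * Rf y ≤ (y ^ 3 + y) * y⁻¹ := by gcongr; exact Rf_le_inv hy
      _ = y ^ 2 + 1 := by field_simp
      _ ≤ 2 := by nlinarith
      _ ≤ exp π := by linarith [add_one_le_exp π, pi_gt_three]
  · calc (y ^ 3 + y) * Rf y ≤ exp (π * y ^ 2) * (exp (-π * (y ^ 2 - 1 ^ 2)) * Rf 1) := by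
          gcongr
          · exact Rf_nonneg y
          · exact cube_add_self_le_exp_pi_mul_sq hy1
          · exact Rf_le_exp_mul_Rf one_pos hy1
      _ = exp π * Rf 1 := by rw [← mul_assoc, ← exp_add]; ring_nf
      _ ≤ exp π := by
          have := Rf_le_inv one_pos
          rw [inv_one] at this
          exact mul_le_of_le_one_right (exp_pos _).le this

end ThetaTail

lemma bddAbove_cube_add_self_mul_Rf :
    BddAbove {x : ℝ | ∃ y : ℝ, 0 < y ∧ x = (y ^ 3 + y) * Rf y} := by
  refine ⟨exp π, ?_⟩
  rintro _ ⟨y, hy, rfl⟩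
  exact cube_add_self_mul_Rf_le hy

lemma cube_add_self_mul_Rf_le_calC {y : ℝ} (hy : 0 < y) : (y ^ 3 + y) * Rf y ≤ calC :=
  le_csSup bddAbove_cube_add_self_mul_Rf ⟨y, hy, rfl⟩

lemma calC_pos : 0 < calC :=
  (mul_pos (by norm_num) (Rf_pos one_pos)).trans_le (cube_add_self_mul_Rf_le_calC one_pos)

lemma Rf_le_calC_div {y : ℝ} (hy : 0 < y) : Rf y ≤ calC / (y ^ 3 + y) := by
  rw [le_div_iff₀ (by positivity), mul_comm]
  exact cube_add_self_mul_Rf_le_calC hy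

lemma hasDerivAt_arctan_exp (y : ℝ) :
    HasDerivAt (fun y => arctan (exp y)) (exp y + exp (-y))⁻¹ y := by
  refine ((hasDerivAt_arctan (exp y)).comp y (hasDerivAt_exp y)).congr_deriv ?_
  rw [exp_neg]
  field_simp
  ring

lemma integrable_inv_exp_add_exp_neg : Integrable fun y : ℝ => (exp y + exp (-y))⁻¹ := by
  have hcont : Continuous fun y : ℝ => (exp y + exp (-y))⁻¹ :=
    Continuous.inv₀ (by fun_prop) fun y => by positivity
  rw [← integrableOn_univ, ← Iic_union_Ioi (a := 0)]
  refine IntegrableOn.union ?_ ?_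
  · refine (integrableOn_exp_Iic 0).mono' hcont.aestronglyMeasurable.restrict
      (ae_of_all _ fun y => ?_)
    rw [norm_inv, Real.norm_of_nonneg (by positivity)]
    exact inv_le_of_inv_le₀ (exp_pos y) (by rw [← exp_neg]; linarith [exp_pos y])
  · refine (integrableOn_exp_neg_Ioi 0).mono' hcont.aestronglyMeasurable.restrict
      (ae_of_all _ fun y => ?_)
    rw [norm_inv, Real.norm_of_nonneg (by positivity)]
    exact inv_le_of_inv_le₀ (exp_pos _) (by rw [← exp_neg, neg_neg]; linarith [exp_pos (-y)])

lemma integral_inv_exp_add_exp_neg : ∫ y : ℝ, (exp y + exp (-y))⁻¹ = π / 2 := by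
  have hbot : Tendsto (fun y => arctan (exp y)) atBot (𝓝 0) := by
    simpa [Function.comp_def] using (continuous_arctan.tendsto 0).comp tendsto_exp_atBot
  have htop : Tendsto (fun y => arctan (exp y)) atTop (𝓝 (π / 2)) :=
    (tendsto_arctan_atTop.mono_right nhdsWithin_le_nhds).comp tendsto_exp_atTop
  rw [integral_of_hasDerivAt_of_tendsto hasDerivAt_arctan_exp integrable_inv_exp_add_exp_neg
    hbot htop, sub_zero]

lemma exp_mul_le_exp_add_exp_neg {t : ℝ} (ht : |t| ≤ 1) (y : ℝ) :
    exp (t * y) ≤ exp y + exp (-y) := by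
  have : t * y ≤ |y| := (le_abs_self _).trans (by rw [abs_mul]; nlinarith [abs_nonneg y])
  rcases abs_cases y with ⟨hy, -⟩ | ⟨hy, -⟩ <;> rw [hy] at this
  · linarith [exp_le_exp.2 this, exp_pos (-y)]
  · linarith [exp_le_exp.2 this, exp_pos y]

-- `(a² + 1)(b² + 1) = (a + b)²` when `a b = 1`
lemma exp_mul_sq_le_cube_add_self_mul {x : ℝ} (hx : 0 ≤ x) (y : ℝ) :
    exp x * (exp y + exp (-y)) ^ 2
      ≤ (exp y ^ 3 + exp y) * (exp (x - y) ^ 3 + exp (x - y)) := by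
  have hab : exp y * exp (-y) = 1 := by rw [← exp_add]; simp
  have hav : exp y * exp (x - y) = exp x := by rw [← exp_add]; ring_nf
  have hbv : exp (-y) ≤ exp (x - y) := exp_le_exp.2 (by linarith)
  calc exp x * (exp y + exp (-y)) ^ 2 = exp x * ((exp y ^ 2 + 1) * (exp (-y) ^ 2 + 1)) := by
        congr 1; linear_combination (1 - exp y * exp (-y)) * hab
    _ ≤ exp x * ((exp y ^ 2 + 1) * (exp (x - y) ^ 2 + 1)) := by gcongr
    _ = (exp y ^ 3 + exp y) * (exp (x - y) ^ 3 + exp (x - y)) := by rw [← hav]; ring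

lemma Rf_mul_Rf_le {u v : ℝ} (hu : 0 < u) (hv : 0 < v) :
    Rf u * Rf v ≤ calC ^ 2 / ((u ^ 3 + u) * (v ^ 3 + v)) := by
  rw [sq, ← div_mul_div_comm]
  exact mul_le_mul (Rf_le_calC_div hu) (Rf_le_calC_div hv) (Rf_nonneg v)
    (div_nonneg calC_pos.le (by positivity))

lemma Wf_integrand_le {σ x : ℝ} (hσ : |2 * σ - 1| ≤ 1) (hx : 0 ≤ x) (y : ℝ) :
    Rf (exp y) * Rf (exp (x - y)) * exp (x + (2 * σ - 1) * y)
      ≤ calC ^ 2 * (exp y + exp (-y))⁻¹ := by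
  calc Rf (exp y) * Rf (exp (x - y)) * exp (x + (2 * σ - 1) * y)
      ≤ calC ^ 2 / ((exp y ^ 3 + exp y) * (exp (x - y) ^ 3 + exp (x - y)))
          * (exp x * (exp y + exp (-y))) := by
        rw [exp_add]
        gcongr
        · exact Rf_mul_Rf_le (exp_pos _) (exp_pos _)
        · exact exp_mul_le_exp_add_exp_neg hσ y
    _ = calC ^ 2 * (exp x * (exp y + exp (-y)) ^ 2
          / ((exp y ^ 3 + exp y) * (exp (x - y) ^ 3 + exp (x - y)))) * (exp y + exp (-y))⁻¹ := by
        field_simp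
    _ ≤ calC ^ 2 * 1 * (exp y + exp (-y))⁻¹ := by
        gcongr
        exact (div_le_one (by positivity)).2 (exp_mul_sq_le_cube_add_self_mul hx y)
    _ = calC ^ 2 * (exp y + exp (-y))⁻¹ := by rw [mul_one]

theorem W_bound (σ : ℝ) (hσ : σ ∈ Ioo (1 / 2 : ℝ) 1) (x : ℝ) (hx : 0 ≤ x) :
    Wf σ x < 2 * calC ^ 2 := by
  have hσ' : |2 * σ - 1| ≤ 1 := abs_le.2 ⟨by linarith [hσ.1], by linarith [hσ.2]⟩
  have hW : Wf σ x ≤ calC ^ 2 * (π / 2) := by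
    rw [← integral_inv_exp_add_exp_neg, ← integral_const_mul]
    refine integral_mono_of_nonneg (ae_of_all _ fun y => ?_)
      (integrable_inv_exp_add_exp_neg.const_mul _) (ae_of_all _ (Wf_integrand_le hσ' hx))
    have := Rf_nonneg (exp y)
    have := Rf_nonneg (exp (x - y))
    positivity
  calc Wf σ x ≤ calC ^ 2 * (π / 2) := hW
    _ < calC ^ 2 * 2 := mul_lt_mul_of_pos_left (by linarith [pi_lt_four]) (pow_pos calC_pos 2)
    _ = 2 * calC ^ 2 := mul_comm _ _
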